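/- Suppose φ, Xα, Xβ, ξ : D → ℝ⁴ are smooth, satisfy the structure system, and are orthonormal at every point of D. Then the map (x,y) ↦ y Xβ(x,y) − φ(x,y) has identically vanishing partial derivative in x; hence u(y) := (1+y²)^{−1/2}(y Xβ(x,y) − φ(x,y)) depends only on y, and u(y) is a unit vector in ℝ⁴. -/

import Mathlib

open Real Set

noncomputable section

/-- `h(x,y) = 2X₀(x) − x X₀'(x) + y² g(x) + √5`. -/
def hfun (X0 g : ℝ → ℝ) (x y : ℝ) : ℝ :=
  2 * X0 x - x * deriv X0 x + y ^ 2 * g x + Real.sqrt 5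

/-- `a₁(x,y) = (2y/(x h(x,y)))(X₀(x) + √5/2)`. -/
def a1 (X0 g : ℝ → ℝ) (x y : ℝ) : ℝ :=
  2 * y / (x * hfun X0 g x y) * (X0 x + Real.sqrt 5 / 2)

/-- `b₁(x,y) = −(1/(x h(x,y)))(X₀(x) + √5/2 + √5(x² − y²))`. -/
def b1 (X0 g : ℝ → ℝ) (x y : ℝ) : ℝ :=
  -(1 / (x * hfun X0 g x y)) * (X0 x + Real.sqrt 5 / 2 + Real.sqrt 5 * (x ^ 2 - y ^ 2))

/-- `c₁(x,y) = −(2/(x h(x,y)))(X₀(x) + √5/2)`. -/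
def c1 (X0 g : ℝ → ℝ) (x y : ℝ) : ℝ :=
  -(2 / (x * hfun X0 g x y)) * (X0 x + Real.sqrt 5 / 2)

/-- `a₂(x,y) = −(1/h(x,y))(2X₀(x) + √5 − (x² + y²) g(x))`. -/
def a2 (X0 g : ℝ → ℝ) (x y : ℝ) : ℝ :=
  -(1 / hfun X0 g x y) * (2 * X0 x + Real.sqrt 5 - (x ^ 2 + y ^ 2) * g x)

/-- `b₂(x,y) = −(2y/h(x,y))(g(x)/2 + √5)`. -/
def b2 (X0 g : ℝ → ℝ) (x y : ℝ) : ℝ :=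
  -(2 * y / hfun X0 g x y) * (g x / 2 + Real.sqrt 5)

/-- `c₂(x,y) = (2y/h(x,y))(X₀''(x) − g(x))`. -/
def c2 (X0 g : ℝ → ℝ) (x y : ℝ) : ℝ :=
  2 * y / hfun X0 g x y * (iteratedDeriv 2 X0 x - g x)

end

noncomputable section

/-- Euclidean `ℝ⁴`. -/
abbrev E4 := EuclideanSpace ℝ (Fin 4)

/-- The maps `φ, Xα, Xβ, ξ : D → ℝ⁴` satisfy the structure system
`∂φ/∂x = −a₁Xα`, `∂Xα/∂x = a₁φ − b₁ξ − c₁Xβ`, `∂Xβ/∂x = c₁Xα`, `∂ξ/∂x = b₁Xα`,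
`∂φ/∂y = −a₂Xβ`, `∂Xβ/∂y = a₂φ − b₂ξ − c₂Xα`, `∂Xα/∂y = c₂Xβ`, `∂ξ/∂y = b₂Xβ`
on `D = {x > 0}`. -/
def StructSys (X0 g : ℝ → ℝ) (φ Xa Xb ξ : ℝ → ℝ → E4) : Prop :=
  ∀ x y : ℝ, 0 < x →
    HasDerivAt (fun s => φ s y) ((-a1 X0 g x y) • Xa x y) x ∧
    HasDerivAt (fun s => Xa s y)
      (a1 X0 g x y • φ x y - b1 X0 g x y • ξ x y - c1 X0 g x y • Xb x y) x ∧
    HasDerivAt (fun s => Xb s y) (c1 X0 g x y • Xa x y) x ∧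
    HasDerivAt (fun s => ξ s y) (b1 X0 g x y • Xa x y) x ∧
    HasDerivAt (fun t => φ x t) ((-a2 X0 g x y) • Xb x y) y ∧
    HasDerivAt (fun t => Xb x t)
      (a2 X0 g x y • φ x y - b2 X0 g x y • ξ x y - c2 X0 g x y • Xa x y) y ∧
    HasDerivAt (fun t => Xa x t) (c2 X0 g x y • Xb x y) y ∧
    HasDerivAt (fun t => ξ x t) (b2 X0 g x y • Xb x y) y

/-- Smoothness of a two-parameter map on `D = {x > 0}`. -/
def SmoothOnD (φ : ℝ → ℝ → E4) : Prop :=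
  ContDiffOn ℝ (⊤ : ℕ∞) (fun p : ℝ × ℝ => φ p.1 p.2) {p : ℝ × ℝ | 0 < p.1}

/-- `(φ, Xα, Xβ, ξ)` is an orthonormal system at every point of `D = {x > 0}`. -/
def OrthFrame (φ Xa Xb ξ : ℝ → ℝ → E4) : Prop :=
  ∀ x y : ℝ, 0 < x → Orthonormal ℝ ![φ x y, Xa x y, Xb x y, ξ x y]

/-- `f` is an associated curvature surface: `∂f/∂x = ((x²−y²)/(x h)) Xα` and
`∂f/∂y = (2y/h) Xβ` on `D = {x > 0}`. -/
def CurvSurf (X0 g : ℝ → ℝ) (Xa Xb f : ℝ → ℝ → E4) : Prop :=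
  ∀ x y : ℝ, 0 < x →
    HasDerivAt (fun s => f s y)
      (((x ^ 2 - y ^ 2) / (x * hfun X0 g x y)) • Xa x y) x ∧
    HasDerivAt (fun t => f x t) ((2 * y / hfun X0 g x y) • Xb x y) y

end

/-- If `φ, Xα, Xβ, ξ` are smooth, satisfy the structure system, and are
orthonormal at every point of `D`, then `(x,y) ↦ y Xβ(x,y) − φ(x,y)` has vanishing partial
derivative in `x`; hence `u(y) = (1+y²)^{−1/2}(y Xβ − φ)` depends only on `y`, and `u(y)` is a
unit vector of `ℝ⁴`. -/
theorem stmt12 (a : ℕ → ℝ) (ha1 : a 1 = 1)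
    (harec : ∀ k : ℕ, 1 ≤ k →
      2 * ((k : ℝ) + 1) * (4 * (k : ℝ) ^ 2 + 5 / 4) * a (k + 1) + (2 * (k : ℝ) - 1) * a k = 0)
    (X0 : ℝ → ℝ)
    (hX0 : ∀ x : ℝ, HasSum (fun k : ℕ => a (k + 1) * x ^ (2 * (k + 1))) (X0 x - 5 / 2))
    (g : ℝ → ℝ) (hganal : AnalyticOnNhd ℝ g Set.univ)
    (hg : ∀ x : ℝ, x ≠ 0 → g x = deriv X0 x / x) (hg0 : g 0 = 2)
    (φ Xa Xb ξ : ℝ → ℝ → E4)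
    (hsm : SmoothOnD φ ∧ SmoothOnD Xa ∧ SmoothOnD Xb ∧ SmoothOnD ξ)
    (hsys : StructSys X0 g φ Xa Xb ξ)
    (horth : OrthFrame φ Xa Xb ξ) :
    (∀ x y : ℝ, 0 < x → HasDerivAt (fun s => y • Xb s y - φ s y) (0 : E4) x) ∧
    (∀ y x x' : ℝ, 0 < x → 0 < x' →
      (1 / Real.sqrt (1 + y ^ 2)) • (y • Xb x y - φ x y)
        = (1 / Real.sqrt (1 + y ^ 2)) • (y • Xb x' y - φ x' y)) ∧
    (∀ x y : ℝ, 0 < x →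
      ‖(1 / Real.sqrt (1 + y ^ 2)) • (y • Xb x y - φ x y)‖ = 1) := by

  have key : ∀ x y : ℝ, 0 < x → HasDerivAt (fun s => y • Xb s y - φ s y) (0 : E4) x := by
    intro x y hx
    obtain ⟨h1, _, h3, _⟩ := hsys x y hx
    have hd := (h3.const_smul y).sub h1
    have hco : y • (c1 X0 g x y • Xa x y) - (-a1 X0 g x y) • Xa x y = (0 : E4) := by
      rw [smul_smul, ← sub_smul]
      have hz : y * c1 X0 g x y - (-a1 X0 g x y) = 0 := by
        simp only [a1, c1]; ring
      rw [hz, zero_smul]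
    rwa [hco] at hd
  have hconst : ∀ y x x' : ℝ, 0 < x → 0 < x' →
      y • Xb x y - φ x y = y • Xb x' y - φ x' y := by
    intro y x x' hx hx'
    have hb := Convex.norm_image_sub_le_of_norm_hasDerivWithin_le
      (f := fun s => y • Xb s y - φ s y) (f' := fun _ => (0 : E4)) (C := 0)
      (fun s hs => (key s y hs).hasDerivWithinAt) (fun s _ => by simp)
      (convex_Ioi (0 : ℝ)) (Set.mem_Ioi.mpr hx') (Set.mem_Ioi.mpr hx)
    rw [zero_mul] at hb
    exact norm_sub_eq_zero_iff.mp (le_antisymm hb (norm_nonneg _))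
  refine ⟨key, fun y x x' hx hx' => by rw [hconst y x x' hx hx'], ?_⟩
  intro x y hx
  have ho := horth x y hx
  have hφ : ‖φ x y‖ = 1 := by simpa using ho.1 0
  have hb : ‖Xb x y‖ = 1 := by simpa using ho.1 2
  have hip : (inner ℝ (Xb x y) (φ x y) : ℝ) = 0 := by
    have := ho.2 (i := 2) (j := 0) (by decide)
    simpa using this
  have hnsq : ‖y • Xb x y - φ x y‖ ^ 2 = 1 + y ^ 2 := by
    rw [norm_sub_sq_real, real_inner_smul_left, hip, norm_smul, Real.norm_eq_abs, hφ, hb,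
      mul_one, mul_zero, mul_zero, sq_abs]
    ring
  have h1y : (0 : ℝ) < 1 + y ^ 2 := by positivity
  have hnorm : ‖y • Xb x y - φ x y‖ = Real.sqrt (1 + y ^ 2) := by
    rw [← Real.sqrt_sq (norm_nonneg _), hnsq]
  rw [norm_smul, hnorm, Real.norm_eq_abs, abs_of_pos (by positivity), one_div,
    inv_mul_cancel₀ (Real.sqrt_ne_zero'.mpr h1y)]
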